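/- arXiv:2605.27795 — 7 statements merged into one kernel-verified Lean document; each statement's English description precedes it below -/
import Mathlib

section
/- Let H be a D×D Hermitian matrix with eigenvalues E_0 = ⋯ = E_{s−1} < E_s ≤ ⋯ ≤ E_{D−1}, spectral gap Δ = E_s − E_0, and let |φ⟩ = Σ_k c_k|ψ_k⟩ be a unit vector with excited-space weight p = Σ_{k=s}^{D−1}|c_k|². Then the variance ⟨φ|H²|φ⟩ − (⟨φ|H|φ⟩)² is at least (1/2)·Δ²·p·(1−p). -/
open Matrix BigOperators

noncomputable section

lemma my_dot_sum {n ι : Type*} [Fintype n] (v : n → ℂ) (t : Finset ι) (f : ι → n → ℂ) :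
    v ⬝ᵥ (∑ k ∈ t, f k) = ∑ k ∈ t, v ⬝ᵥ f k := by
  simp only [dotProduct, Finset.sum_apply, Finset.mul_sum]
  exact Finset.sum_comm

lemma my_sum_mulVec {n ι : Type*} [Fintype n] (t : Finset ι) (M : ι → Matrix n n ℂ)
    (w : n → ℂ) : (∑ k ∈ t, M k) *ᵥ w = ∑ k ∈ t, M k *ᵥ w := by
  funext i
  simp only [mulVec, dotProduct, Matrix.sum_apply, Finset.sum_apply, Finset.sum_mul]
  exact Finset.sum_comm

lemma my_mulVec_sum {n ι : Type*} [Fintype n] (t : Finset ι) (M : Matrix n n ℂ)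
    (f : ι → n → ℂ) : M *ᵥ (∑ k ∈ t, f k) = ∑ k ∈ t, M *ᵥ f k := by
  funext i
  simp only [mulVec, dotProduct, Finset.sum_apply, Finset.mul_sum]
  exact Finset.sum_comm

lemma my_vecMulVec_mulVec {n : Type*} [Fintype n] (u v w : n → ℂ) :
    vecMulVec u v *ᵥ w = (v ⬝ᵥ w) • u := by
  funext i
  simp only [mulVec, vecMulVec_apply, dotProduct, Pi.smul_apply, smul_eq_mul,
    Finset.sum_mul, Finset.mul_sum]
  exact Finset.sum_congr rfl fun j _ => by ring

lemma my_real_var_bound (D s : ℕ) (a E : Fin D → ℝ) (E0 Δ p : ℝ)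
    (hanonneg : ∀ k, 0 ≤ a k) (hsum1 : ∑ k, a k = 1)
    (hdeg : ∀ k : Fin D, (k : ℕ) < s → E k = E0)
    (hgap : ∀ k : Fin D, s ≤ (k : ℕ) → E0 + Δ ≤ E k) (hΔpos : 0 < Δ)
    (hp : p = ∑ k ∈ Finset.univ.filter (fun k : Fin D => s ≤ (k : ℕ)), a k) :
    (1 / 2) * Δ ^ 2 * p * (1 - p)
      ≤ (∑ k, a k * E k ^ 2) - (∑ k, a k * E k) ^ 2 := by
  set F := Finset.univ.filter (fun k : Fin D => s ≤ (k : ℕ)) with hF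
  set T1 := ∑ k ∈ F, a k * (E k - E0) with hT1
  set T2 := ∑ k ∈ F, a k * (E k - E0) ^ 2 with hT2
  have hzero1 : ∀ k ∈ Finset.univ.filter (fun k : Fin D => ¬ s ≤ (k : ℕ)),
      a k * (E k - E0) = 0 := by
    intro k hk
    simp only [Finset.mem_filter, not_le] at hk
    rw [hdeg k hk.2]; ring
  have hzero2 : ∀ k ∈ Finset.univ.filter (fun k : Fin D => ¬ s ≤ (k : ℕ)),
      a k * (E k - E0) ^ 2 = 0 := by
    intro k hk
    simp only [Finset.mem_filter, not_le] at hk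
    rw [hdeg k hk.2]; ring
  have hb1 : ∑ k, a k * (E k - E0) = T1 := by
    rw [← Finset.sum_filter_add_sum_filter_not Finset.univ (fun k : Fin D => s ≤ (k : ℕ))
      (fun k => a k * (E k - E0)), Finset.sum_eq_zero hzero1, add_zero, ← hF, hT1]
  have hb2 : ∑ k, a k * (E k - E0) ^ 2 = T2 := by
    rw [← Finset.sum_filter_add_sum_filter_not Finset.univ (fun k : Fin D => s ≤ (k : ℕ))
      (fun k => a k * (E k - E0) ^ 2), Finset.sum_eq_zero hzero2, add_zero, ← hF, hT2]
  have hAE : ∑ k, a k * E k = E0 + T1 := by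
    have h : ∀ k : Fin D, a k * E k = a k * (E k - E0) + a k * E0 := fun k => by ring
    rw [Finset.sum_congr rfl fun k _ => h k, Finset.sum_add_distrib, hb1,
      ← Finset.sum_mul, hsum1]
    ring
  have hAE2 : ∑ k, a k * E k ^ 2 = T2 + 2 * E0 * T1 + E0 ^ 2 := by
    have h : ∀ k : Fin D, a k * E k ^ 2
        = a k * (E k - E0) ^ 2 + 2 * E0 * (a k * (E k - E0)) + E0 ^ 2 * a k := fun k => by ring
    rw [Finset.sum_congr rfl fun k _ => h k, Finset.sum_add_distrib, Finset.sum_add_distrib,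
      hb2, ← Finset.mul_sum, hb1, ← Finset.mul_sum, hsum1]
    ring
  have hCS : T1 ^ 2 ≤ p * T2 := by
    have := Finset.sum_sq_le_sum_mul_sum_of_sq_eq_mul F
      (r := fun k => a k * (E k - E0)) (f := a) (g := fun k => a k * (E k - E0) ^ 2)
      (fun k _ => hanonneg k) (fun k _ => mul_nonneg (hanonneg k) (sq_nonneg _)) (fun k _ => by ring)
    rw [hp]
    exact this
  have hT2low : Δ ^ 2 * p ≤ T2 := by
    rw [hp, Finset.mul_sum, hT2]
    refine Finset.sum_le_sum fun k hk => ?_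
    have hk' : s ≤ (k : ℕ) := (Finset.mem_filter.mp hk).2
    have hgk := hgap k hk'
    nlinarith [hanonneg k, hΔpos, hgk, mul_nonneg (hanonneg k)
      (mul_nonneg (by linarith : (0:ℝ) ≤ E k - E0 - Δ) (by linarith : (0:ℝ) ≤ E k - E0 + Δ))]
  have hpnn : 0 ≤ p := by
    rw [hp]; exact Finset.sum_nonneg fun k _ => hanonneg k
  have hple : p ≤ 1 := by
    rw [hp, ← hsum1]
    exact Finset.sum_le_sum_of_subset_of_nonneg (Finset.filter_subset _ _)
      (fun k _ _ => hanonneg k)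
  rw [hAE, hAE2]
  have h1 : Δ ^ 2 * p * (1 - p) ≤ (1 - p) * T2 :=
    le_of_eq_of_le (by ring) (mul_le_mul_of_nonneg_left hT2low (by linarith))
  nlinarith [hCS, h1, hpnn, hple, sq_nonneg Δ,
    mul_nonneg (mul_nonneg (sq_nonneg Δ) hpnn) (by linarith : (0:ℝ) ≤ 1 - p)]

/-- variance lower bound `F(|φ⟩) ≥ (1/2)·Δ²·p·(1−p)`. -/
theorem variance_lower_bound (D : ℕ) (s : ℕ) (hs : s < D)
    (H : Matrix (Fin D) (Fin D) ℂ)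
    (E : Fin D → ℝ) (ψ : Fin D → (Fin D → ℂ))
    (hortho : ∀ j k : Fin D, star (ψ j) ⬝ᵥ ψ k = if j = k then 1 else 0)
    (hH : H = ∑ k, (E k : ℂ) • vecMulVec (ψ k) (star (ψ k)))
    (hmono : ∀ j k : Fin D, j ≤ k → E j ≤ E k)
    (E0 : ℝ) (hdeg : ∀ k : Fin D, (k : ℕ) < s → E k = E0)
    (Δ : ℝ) (hΔ : Δ = E ⟨s, hs⟩ - E0) (hΔpos : 0 < Δ)
    (φ : Fin D → ℂ) (hunit : star φ ⬝ᵥ φ = 1)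
    (c : Fin D → ℂ) (hc : ∀ k, c k = star (ψ k) ⬝ᵥ φ)
    (hdecomp : φ = ∑ k, c k • ψ k)
    (p : ℝ)
    (hp : p = ∑ k ∈ Finset.univ.filter (fun k : Fin D => s ≤ (k : ℕ)),
      Complex.normSq (c k)) :
    (1 / 2) * Δ ^ 2 * p * (1 - p)
      ≤ (star φ ⬝ᵥ (H * H).mulVec φ).re - ((star φ ⬝ᵥ H.mulVec φ).re) ^ 2 := by
  set a : Fin D → ℝ := fun k => Complex.normSq (c k) with ha
  have hconj : ∀ k, star φ ⬝ᵥ ψ k = (starRingEnd ℂ) (c k) := by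
    intro k
    rw [star_dotProduct, ← hc k]
    rfl
  have hHψ : ∀ k, H *ᵥ ψ k = (E k : ℂ) • ψ k := by
    intro k
    rw [hH, my_sum_mulVec]
    have h : ∀ j : Fin D, ((E j : ℂ) • vecMulVec (ψ j) (star (ψ j))) *ᵥ ψ k
        = if j = k then (E k : ℂ) • ψ k else 0 := by
      intro j
      rw [smul_mulVec, my_vecMulVec_mulVec, hortho j k]
      by_cases h : j = k
      · subst h; simp
      · simp [h]
    rw [Finset.sum_congr rfl fun j _ => h j]
    simp
  have hdotcomb : ∀ d : Fin D → ℂ,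
      star φ ⬝ᵥ (∑ k, d k • ψ k) = ∑ k, d k * (starRingEnd ℂ) (c k) := by
    intro d
    rw [my_dot_sum]
    exact Finset.sum_congr rfl fun k _ => by
      rw [dotProduct_smul, hconj k]; rfl
  have hHφ : H *ᵥ φ = ∑ k, (c k * (E k : ℂ)) • ψ k := by
    conv_lhs => rw [hdecomp]
    rw [my_mulVec_sum]
    exact Finset.sum_congr rfl fun k _ => by
      rw [mulVec_smul, hHψ k, smul_smul]
  have hH2φ : (H * H) *ᵥ φ = ∑ k, (c k * (E k : ℂ) ^ 2) • ψ k := by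
    rw [← mulVec_mulVec, hHφ, my_mulVec_sum]
    exact Finset.sum_congr rfl fun k _ => by
      rw [mulVec_smul, hHψ k, smul_smul]; ring_nf
  have hmulconj : ∀ k, c k * (starRingEnd ℂ) (c k) = (a k : ℂ) := fun k => Complex.mul_conj (c k)
  have hEH : (star φ ⬝ᵥ H *ᵥ φ).re = ∑ k, a k * E k := by
    rw [hHφ, hdotcomb]
    have h : ∀ k : Fin D, c k * (E k : ℂ) * (starRingEnd ℂ) (c k) = ((a k * E k : ℝ) : ℂ) := by
      intro k
      rw [mul_comm (c k) ((E k : ℂ)), mul_assoc, hmulconj k]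
      push_cast; ring
    rw [Finset.sum_congr rfl fun k _ => h k, ← Complex.ofReal_sum]
    exact Complex.ofReal_re _
  have hEH2 : (star φ ⬝ᵥ (H * H) *ᵥ φ).re = ∑ k, a k * E k ^ 2 := by
    rw [hH2φ, hdotcomb]
    have h : ∀ k : Fin D,
        c k * (E k : ℂ) ^ 2 * (starRingEnd ℂ) (c k) = ((a k * E k ^ 2 : ℝ) : ℂ) := by
      intro k
      rw [mul_comm (c k) ((E k : ℂ) ^ 2), mul_assoc, hmulconj k]
      push_cast; ring
    rw [Finset.sum_congr rfl fun k _ => h k, ← Complex.ofReal_sum]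
    exact Complex.ofReal_re _
  have hsum1 : ∑ k, a k = 1 := by
    have h1 : star φ ⬝ᵥ φ = ∑ k, (a k : ℂ) := by
      nth_rewrite 2 [hdecomp]
      rw [hdotcomb]
      exact Finset.sum_congr rfl fun k _ => hmulconj k
    have h2 : ((∑ k, a k : ℝ) : ℂ) = 1 := by rw [Complex.ofReal_sum, ← h1, hunit]
    exact_mod_cast h2
  have hgap : ∀ k : Fin D, s ≤ (k : ℕ) → E0 + Δ ≤ E k := by
    intro k hk
    have hle : (⟨s, hs⟩ : Fin D) ≤ k := by
      rw [Fin.le_def]; exact hk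
    have := hmono ⟨s, hs⟩ k hle
    linarith [this]
  rw [hEH, hEH2]
  exact my_real_var_bound D s a E E0 Δ p (fun k => Complex.normSq_nonneg _) hsum1 hdeg hgap
    hΔpos hp
end
end

section
/- Define f(U) = ⟨φ_0|U†HU|φ_0⟩ for unitary U, with Riemannian gradient grad f(U) = HU ρ_0 − U·sym(U†HU ρ_0), where ρ_0 = |φ_0⟩⟨φ_0| and sym(A) = (A + A†)/2. Then ‖grad f(U)‖_F² = (⟨φ|H²|φ⟩ − f(U)²)/2, where |φ⟩ = U|φ_0⟩. -/
open Matrix BigOperators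

noncomputable section

/-- Hermitian part `sym(A) = (A + A†)/2`. -/
def msym {D : ℕ} (A : Matrix (Fin D) (Fin D) ℂ) : Matrix (Fin D) (Fin D) ℂ :=
  (1 / 2 : ℂ) • (A + Aᴴ)

/-- Riemannian gradient `grad f(U) = H U ρ₀ − U sym(U† H U ρ₀)`. -/
def rgrad {D : ℕ} (H U ρ : Matrix (Fin D) (Fin D) ℂ) : Matrix (Fin D) (Fin D) ℂ :=
  H * U * ρ - U * msym (Uᴴ * H * U * ρ)

/-- Squared Frobenius norm. -/
def frobSq {D : ℕ} (A : Matrix (Fin D) (Fin D) ℂ) : ℝ :=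
  ∑ i, ∑ j, Complex.normSq (A i j)

open ComplexConjugate in
/-- Factorization of the big double sum. -/
lemma sum_prod_sub_aux {D : ℕ} (x1 y1 x2 y2 : Fin D → ℂ) :
    ∑ i, ∑ j, (x1 i * y1 j - x2 i * y2 j) * conj (x1 i * y1 j - x2 i * y2 j)
      = (∑ i, x1 i * conj (x1 i)) * (∑ j, y1 j * conj (y1 j))
        - (∑ i, x1 i * conj (x2 i)) * (∑ j, y1 j * conj (y2 j))
        - (∑ i, x2 i * conj (x1 i)) * (∑ j, y2 j * conj (y1 j))
        + (∑ i, x2 i * conj (x2 i)) * (∑ j, y2 j * conj (y2 j)) := by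
  rw [Finset.sum_mul_sum, Finset.sum_mul_sum, Finset.sum_mul_sum, Finset.sum_mul_sum,
    ← Finset.sum_sub_distrib, ← Finset.sum_sub_distrib, ← Finset.sum_add_distrib]
  refine Finset.sum_congr rfl fun i _ => ?_
  rw [← Finset.sum_sub_distrib, ← Finset.sum_sub_distrib, ← Finset.sum_add_distrib]
  refine Finset.sum_congr rfl fun j _ => ?_
  simp only [map_sub, _root_.map_mul]
  ring

lemma mul_vecMulVec_aux {D : ℕ} (A : Matrix (Fin D) (Fin D) ℂ) (b c : Fin D → ℂ) :
    A * vecMulVec b c = vecMulVec (A.mulVec b) c := by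
  ext i j
  simp [Matrix.mul_apply, vecMulVec_apply, Matrix.mulVec, dotProduct, Finset.sum_mul,
    mul_assoc]

lemma conjTranspose_vecMulVec_aux {D : ℕ} (a b : Fin D → ℂ) :
    (vecMulVec a b)ᴴ = vecMulVec (star b) (star a) := by
  ext i j
  simp [Matrix.conjTranspose_apply, vecMulVec_apply, mul_comm]

open ComplexConjugate in
/-- `‖grad f(U)‖_F² = (⟨φ|H²|φ⟩ − f(U)²)/2` with `|φ⟩ = U|φ₀⟩`. -/
theorem grad_frobSq_eq (D : ℕ) (H : Matrix (Fin D) (Fin D) ℂ) (hH : H.IsHermitian)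
    (φ0 : Fin D → ℂ) (hφ0 : star φ0 ⬝ᵥ φ0 = 1)
    (U : Matrix (Fin D) (Fin D) ℂ) (hU : U ∈ Matrix.unitaryGroup (Fin D) ℂ) :
    frobSq (rgrad H U (vecMulVec φ0 (star φ0)))
      = ((star (U.mulVec φ0) ⬝ᵥ (H * H).mulVec (U.mulVec φ0)).re
          - ((star (U.mulVec φ0) ⬝ᵥ H.mulVec (U.mulVec φ0)).re) ^ 2) / 2 := by
  have hU1 : Uᴴ * U = 1 := by
    have := hU.1; rwa [Matrix.star_eq_conjTranspose] at this
  have hU2 : U * Uᴴ = 1 := by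
    have := hU.2; rwa [Matrix.star_eq_conjTranspose] at this
  set φ : Fin D → ℂ := U.mulVec φ0 with hφdef
  set ψ : Fin D → ℂ := H.mulVec φ with hψdef
  set w : Fin D → ℂ := Uᴴ.mulVec ψ with hwdef
  -- star of ψ
  have hstarψ : star ψ = star φ ᵥ* H := by
    rw [hψdef, Matrix.star_mulVec, hH.eq]
  have hstarφ : star φ = star φ0 ᵥ* Uᴴ := by
    rw [hφdef, Matrix.star_mulVec]
  have hstarw : star w = star ψ ᵥ* U := by
    rw [hwdef, Matrix.star_mulVec, Matrix.conjTranspose_conjTranspose]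
  -- basic dot product facts
  have hφnorm : star φ ⬝ᵥ φ = 1 := by
    rw [hφdef, Matrix.dotProduct_mulVec, ← hφdef, hstarφ, Matrix.vecMul_vecMul, hU1,
      Matrix.vecMul_one, hφ0]
  have hS : star w ⬝ᵥ w = star ψ ⬝ᵥ ψ := by
    rw [hwdef, Matrix.dotProduct_mulVec, ← hwdef, hstarw, Matrix.vecMul_vecMul, hU2,
      Matrix.vecMul_one]
  set E : ℂ := star φ ⬝ᵥ ψ with hEdef
  set S : ℂ := star ψ ⬝ᵥ ψ with hSdef
  have hE0 : star φ0 ⬝ᵥ w = E := by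
    rw [hwdef, Matrix.dotProduct_mulVec, ← hstarφ, hEdef]
  have hEconj : conj E = E := by
    have h1 : E = star ψ ⬝ᵥ φ := by
      rw [hEdef, hψdef, Matrix.dotProduct_mulVec, ← hstarψ]
    calc conj E = star (star φ ⬝ᵥ star (star ψ)) := by rw [star_star]; rfl
      _ = star (star (star ψ ⬝ᵥ φ)) := by rw [Matrix.star_dotProduct_star]
      _ = E := by rw [star_star, ← h1]
  have hSconj : conj S = S := by
    calc conj S = star (star ψ ⬝ᵥ star (star ψ)) := by rw [star_star]; rfl
      _ = star (star (star ψ ⬝ᵥ ψ)) := by rw [Matrix.star_dotProduct_star]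
      _ = S := by rw [star_star, ← hSdef]
  -- the matrix identity for the gradient
  have hψ2 : U.mulVec w = ψ := by
    rw [hwdef, Matrix.mulVec_mulVec, hU2, Matrix.one_mulVec]
  have hG : rgrad H U (vecMulVec φ0 (star φ0))
      = vecMulVec ψ (star φ0) - (1 / 2 : ℂ) • (vecMulVec ψ (star φ0) + vecMulVec φ (star w)) := by
    have h1 : H * U * vecMulVec φ0 (star φ0) = vecMulVec ψ (star φ0) := by
      rw [mul_vecMulVec_aux, ← Matrix.mulVec_mulVec, ← hφdef, ← hψdef]
    have h2 : Uᴴ * H * U * vecMulVec φ0 (star φ0) = vecMulVec w (star φ0) := by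
      rw [mul_vecMulVec_aux]
      rw [← Matrix.mulVec_mulVec, ← Matrix.mulVec_mulVec, ← hφdef, ← hψdef, ← hwdef]
    rw [rgrad, h1, h2, msym, conjTranspose_vecMulVec_aux, star_star, Matrix.mul_smul,
      Matrix.mul_add, mul_vecMulVec_aux, mul_vecMulVec_aux, hψ2, ← hφdef]
  -- entrywise formula
  have hentry : ∀ i j, rgrad H U (vecMulVec φ0 (star φ0)) i j
      = ((1 / 2 : ℂ) * ψ i) * (star φ0) j - ((1 / 2 : ℂ) * φ i) * (star w) j := by
    intro i j
    rw [hG]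
    simp [vecMulVec_apply, Matrix.sub_apply, Matrix.add_apply, Matrix.smul_apply]
    ring
  -- the complex double sum
  have hsum : (∑ i, ∑ j, rgrad H U (vecMulVec φ0 (star φ0)) i j
        * conj (rgrad H U (vecMulVec φ0 (star φ0)) i j)) = (S - E ^ 2) / 2 := by
    simp only [hentry]
    rw [sum_prod_sub_aux]
    have e1 : (∑ i, ((1 / 2 : ℂ) * ψ i) * conj ((1 / 2 : ℂ) * ψ i)) = (1 / 4 : ℂ) * S := by
      rw [hSdef, dotProduct, Finset.mul_sum]
      refine Finset.sum_congr rfl fun i _ => ?_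
      simp only [_root_.map_mul, map_div₀, _root_.map_one, Complex.conj_ofNat, Pi.star_apply, Complex.star_def]
      ring
    have e2 : (∑ j, (star φ0) j * conj ((star φ0) j)) = 1 := by
      rw [← hφ0, dotProduct]
      refine Finset.sum_congr rfl fun j _ => ?_
      simp [Pi.star_apply, mul_comm]
    have e3 : (∑ i, ((1 / 2 : ℂ) * ψ i) * conj ((1 / 2 : ℂ) * φ i)) = (1 / 4 : ℂ) * E := by
      rw [hEdef, dotProduct, Finset.mul_sum]
      refine Finset.sum_congr rfl fun i _ => ?_
      simp only [_root_.map_mul, map_div₀, _root_.map_one, Complex.conj_ofNat, Pi.star_apply, Complex.star_def]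
      ring
    have e4 : (∑ j, (star φ0) j * conj ((star w) j)) = E := by
      have : (∑ j, (star φ0) j * conj ((star w) j)) = star φ0 ⬝ᵥ w := by
        rw [dotProduct]
        refine Finset.sum_congr rfl fun j _ => ?_
        simp [Pi.star_apply]
      rw [this, hE0]
    have e5 : (∑ i, ((1 / 2 : ℂ) * φ i) * conj ((1 / 2 : ℂ) * ψ i)) = (1 / 4 : ℂ) * E := by
      have : (∑ i, ((1 / 2 : ℂ) * φ i) * conj ((1 / 2 : ℂ) * ψ i))
          = conj (∑ i, ((1 / 2 : ℂ) * ψ i) * conj ((1 / 2 : ℂ) * φ i)) := by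
        rw [map_sum]
        refine Finset.sum_congr rfl fun i _ => ?_
        simp only [_root_.map_mul, Complex.conj_conj]
        ring
      rw [this, e3, _root_.map_mul, hEconj]
      simp only [map_div₀, _root_.map_one, Complex.conj_ofNat]
    have e6 : (∑ j, (star w) j * conj ((star φ0) j)) = E := by
      have : (∑ j, (star w) j * conj ((star φ0) j)) = conj (∑ j, (star φ0) j * conj ((star w) j)) := by
        rw [map_sum]
        refine Finset.sum_congr rfl fun j _ => ?_
        simp only [_root_.map_mul, Complex.conj_conj]
        ring
      rw [this, e4, hEconj]
    have e7 : (∑ i, ((1 / 2 : ℂ) * φ i) * conj ((1 / 2 : ℂ) * φ i)) = (1 / 4 : ℂ) := by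
      have : (∑ i, ((1 / 2 : ℂ) * φ i) * conj ((1 / 2 : ℂ) * φ i))
          = (1 / 4 : ℂ) * (star φ ⬝ᵥ φ) := by
        rw [dotProduct, Finset.mul_sum]
        refine Finset.sum_congr rfl fun i _ => ?_
        simp only [_root_.map_mul, map_div₀, _root_.map_one, Complex.conj_ofNat, Pi.star_apply, Complex.star_def]
        ring
      rw [this, hφnorm, mul_one]
    have e8 : (∑ j, (star w) j * conj ((star w) j)) = S := by
      have : (∑ j, (star w) j * conj ((star w) j)) = star w ⬝ᵥ w := by
        rw [dotProduct]
        refine Finset.sum_congr rfl fun j _ => ?_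
        simp [Pi.star_apply, mul_comm]
      rw [this, hS, hSdef]
    rw [e1, e2, e3, e4, e5, e6, e7, e8]
    ring
  -- pass to real parts
  have hfrob : frobSq (rgrad H U (vecMulVec φ0 (star φ0)))
      = ((S - E ^ 2) / 2).re := by
    rw [← hsum, frobSq, Complex.re_sum]
    refine Finset.sum_congr rfl fun i _ => ?_
    rw [Complex.re_sum]
    refine Finset.sum_congr rfl fun j _ => ?_
    rw [Complex.mul_conj, Complex.ofReal_re]
  have hSre : S = (S.re : ℂ) := (Complex.conj_eq_iff_re.mp hSconj).symm
  have hEre : E = (E.re : ℂ) := (Complex.conj_eq_iff_re.mp hEconj).symm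
  have hS2 : star (U.mulVec φ0) ⬝ᵥ (H * H).mulVec (U.mulVec φ0) = S := by
    rw [← hφdef, ← Matrix.mulVec_mulVec, ← hψdef, Matrix.dotProduct_mulVec, ← hstarψ, hSdef]
  rw [hfrob, hS2]
  obtain ⟨s, hs⟩ := Complex.conj_eq_iff_real.mp hSconj
  obtain ⟨e, he⟩ := Complex.conj_eq_iff_real.mp hEconj
  rw [hs, he,
    show (((s : ℂ) - (e : ℂ) ^ 2) / 2) = (((s - e ^ 2) / 2 : ℝ) : ℂ) from by push_cast; ring,
    Complex.ofReal_re, Complex.ofReal_re, Complex.ofReal_re]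
end
end

section
/- Let f(U) = ⟨φ_0|U†HU|φ_0⟩ on the unitary group U(D) with H Hermitian having eigenvalues E_0 = ⋯ = E_{s−1} < E_s ≤ ⋯ ≤ E_{D−1} and gap Δ = E_s − E_0. If f(U) − E_0 ≤ Δ/2, then the Riemannian gradient satisfies ‖grad f(U)‖_F² ≥ (Δ²/(16‖H‖))·(f(U) − E_0), where ‖H‖ is the operator norm. -/
/-!
Write `w = U φ₀` and `p k = |⟨ψ k, w⟩|²`, a probability distribution on the spectrum with mean
`f = Σ p k E k = f(U)`. For the pure state `ρ₀` the gradient is `½ (H w φ₀† − w (U† H w)†)`, whose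
squared Frobenius norm is half the energy variance `Σ p k E k² − f²`. Let `P` be the weight of
the excited levels (`E k ≥ E₀ + Δ`). Since all levels lie in `[-‖H‖, ‖H‖]`, `f − E₀ ≤ 2 ‖H‖ P`;
since `f ≤ E₀ + Δ/2`, every excited level is at distance at least `Δ/2` from the mean, so the
variance is at least `(Δ/2)² P`.
-/

open Matrix BigOperators
open scoped Matrix.Norms.L2Operator

noncomputable section

section GappedDistribution

open Finset

variable {ι : Type*} [Fintype ι] {p E : ι → ℝ} {E0 Δ : ℝ}

lemma exists_eq_of_mean_sub_le (hp0 : ∀ k, 0 ≤ p k) (hp1 : ∑ k, p k = 1)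
    (hgap : ∀ k, E k = E0 ∨ E0 + Δ ≤ E k) (hΔ : 0 < Δ)
    (hmean : ∑ k, E k * p k - E0 ≤ Δ / 2) : ∃ k, E k = E0 := by
  by_contra! hne
  have : E0 + Δ ≤ ∑ k, E k * p k := calc
    E0 + Δ = ∑ k, (E0 + Δ) * p k := by rw [← mul_sum, hp1, mul_one]
    _ ≤ ∑ k, E k * p k := sum_le_sum fun k _ =>
        mul_le_mul_of_nonneg_right ((hgap k).resolve_left (hne k)) (hp0 k)
  linarith

lemma mean_sub_le_mul_sum_filter_ne (hp0 : ∀ k, 0 ≤ p k) (hp1 : ∑ k, p k = 1) {N : ℝ}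
    (hN : ∀ k, |E k| ≤ N) (hE0 : |E0| ≤ N) :
    ∑ k, E k * p k - E0 ≤ 2 * N * ∑ k with E k ≠ E0, p k := calc
  ∑ k, E k * p k - E0 = ∑ k, (E k - E0) * p k := by
      simp only [sub_mul, sum_sub_distrib, ← mul_sum, hp1, mul_one]
  _ = ∑ k with E k ≠ E0, (E k - E0) * p k :=
      (sum_filter_of_ne fun k _ h => mt (fun hk => by rw [hk, sub_self, zero_mul]) h).symm
  _ ≤ ∑ k with E k ≠ E0, 2 * N * p k := sum_le_sum fun k _ =>
      mul_le_mul_of_nonneg_right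
        (by linarith [(abs_le.mp (hN k)).2, (abs_le.mp hE0).1]) (hp0 k)
  _ = 2 * N * ∑ k with E k ≠ E0, p k := (mul_sum _ _ _).symm

lemma sq_mul_sum_filter_ne_le_variance (hp0 : ∀ k, 0 ≤ p k) (hp1 : ∑ k, p k = 1)
    (hgap : ∀ k, E k = E0 ∨ E0 + Δ ≤ E k) (hΔ : 0 ≤ Δ)
    (hmean : ∑ k, E k * p k - E0 ≤ Δ / 2) :
    (Δ / 2) ^ 2 * ∑ k with E k ≠ E0, p k
      ≤ ∑ k, E k ^ 2 * p k - (∑ k, E k * p k) ^ 2 := by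
  set m := ∑ k, E k * p k
  calc (Δ / 2) ^ 2 * ∑ k with E k ≠ E0, p k
      = ∑ k with E k ≠ E0, (Δ / 2) ^ 2 * p k := mul_sum _ _ _
    _ ≤ ∑ k with E k ≠ E0, (E k - m) ^ 2 * p k := sum_le_sum fun k hk => by
        have hEk := (hgap k).resolve_left (mem_filter.mp hk).2
        exact mul_le_mul_of_nonneg_right
          (pow_le_pow_left₀ (by linarith) (by linarith) 2) (hp0 k)
    _ ≤ ∑ k, (E k - m) ^ 2 * p k :=
        sum_le_sum_of_subset_of_nonneg (subset_univ _) fun k _ _ =>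
          mul_nonneg (sq_nonneg _) (hp0 k)
    _ = ∑ k, E k ^ 2 * p k - m ^ 2 := by
        have hexpand : ∀ k, (E k - m) ^ 2 * p k
            = E k ^ 2 * p k - 2 * m * (E k * p k) + m ^ 2 * p k := fun k => by ring
        simp only [hexpand, sum_add_distrib, sum_sub_distrib, ← mul_sum, hp1]
        ring

theorem mul_mean_sub_le_variance_of_gap (hp0 : ∀ k, 0 ≤ p k) (hp1 : ∑ k, p k = 1)
    (hgap : ∀ k, E k = E0 ∨ E0 + Δ ≤ E k) (hΔ : 0 < Δ) {N : ℝ} (hNpos : 0 < N)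
    (hN : ∀ k, |E k| ≤ N) (hmean : ∑ k, E k * p k - E0 ≤ Δ / 2) :
    Δ ^ 2 / (16 * N) * (∑ k, E k * p k - E0)
      ≤ (∑ k, E k ^ 2 * p k - (∑ k, E k * p k) ^ 2) / 2 := by
  obtain ⟨k₀, hk₀⟩ := exists_eq_of_mean_sub_le hp0 hp1 hgap hΔ hmean
  have hexcess := mean_sub_le_mul_sum_filter_ne hp0 hp1 hN (hk₀ ▸ hN k₀)
  have hvar := sq_mul_sum_filter_ne_le_variance hp0 hp1 hgap hΔ.le hmean
  calc Δ ^ 2 / (16 * N) * (∑ k, E k * p k - E0)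
      ≤ Δ ^ 2 / (16 * N) * (2 * N * ∑ k with E k ≠ E0, p k) := by gcongr
    _ = (Δ / 2) ^ 2 * (∑ k with E k ≠ E0, p k) / 2 := by field_simp; ring
    _ ≤ _ := by gcongr

end GappedDistribution

section Orthonormal

variable {ι n : Type*} [Fintype ι] [Fintype n] {ψ : ι → n → ℂ}

lemma star_mulVec_dotProduct_mulVec [DecidableEq n] {V : Matrix n n ℂ} (hV : Vᴴ * V = 1)
    (x y : n → ℂ) :
    star (V *ᵥ x) ⬝ᵥ V *ᵥ y = star x ⬝ᵥ y := by
  rw [star_mulVec, ← dotProduct_mulVec, mulVec_mulVec, hV, one_mulVec]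

lemma mulVec_eq_sum_smul_of_eq_sum {H : Matrix n n ℂ} {E : ι → ℝ}
    (hH : H = ∑ k, (E k : ℂ) • vecMulVec (ψ k) (star (ψ k))) (w : n → ℂ) :
    H *ᵥ w = ∑ k, ((E k : ℂ) * (star (ψ k) ⬝ᵥ w)) • ψ k := by
  simp only [hH, sum_mulVec, smul_mulVec, vecMulVec_mulVec, op_smul_eq_smul, smul_smul]

lemma star_dotProduct_sum_smul (v : n → ℂ) (b : ι → ℂ) :
    star v ⬝ᵥ ∑ k, b k • ψ k = ∑ k, star (star (ψ k) ⬝ᵥ v) * b k := by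
  simp only [dotProduct_sum, dotProduct_smul, star_dotProduct (ψ _) v, star_star,
    smul_eq_mul, mul_comm]

lemma star_dotProduct_mulVec_eq_sum {H : Matrix n n ℂ} {E : ι → ℝ}
    (hH : H = ∑ k, (E k : ℂ) • vecMulVec (ψ k) (star (ψ k))) (w : n → ℂ) :
    star w ⬝ᵥ H *ᵥ w = ((∑ k, E k * Complex.normSq (star (ψ k) ⬝ᵥ w) : ℝ) : ℂ) := by
  rw [mulVec_eq_sum_smul_of_eq_sum hH, star_dotProduct_sum_smul]
  push_cast [Complex.normSq_eq_conj_mul_self, Complex.star_def]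
  exact Finset.sum_congr rfl fun k _ => by ring

variable [DecidableEq ι] (hψ : ∀ j k, star (ψ j) ⬝ᵥ ψ k = if j = k then 1 else 0)
include hψ

lemma star_sum_smul_dotProduct_sum_smul (a b : ι → ℂ) :
    star (∑ k, a k • ψ k) ⬝ᵥ ∑ k, b k • ψ k = ∑ k, star (a k) * b k := by
  simp only [star_sum, star_smul, sum_dotProduct, dotProduct_sum, smul_dotProduct,
    dotProduct_smul, hψ, smul_eq_mul, mul_ite, mul_one, mul_zero, Finset.sum_ite_eq',
    Finset.mem_univ, if_true]
  exact Finset.sum_congr rfl fun _ _ => mul_comm _ _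

lemma mulVec_eq_smul_of_eq_sum {H : Matrix n n ℂ} {E : ι → ℝ}
    (hH : H = ∑ k, (E k : ℂ) • vecMulVec (ψ k) (star (ψ k))) (j : ι) :
    H *ᵥ ψ j = (E j : ℂ) • ψ j := by
  simp [mulVec_eq_sum_smul_of_eq_sum hH, hψ]

lemma star_mulVec_dotProduct_mulVec_eq_sum {H : Matrix n n ℂ} {E : ι → ℝ}
    (hH : H = ∑ k, (E k : ℂ) • vecMulVec (ψ k) (star (ψ k))) (w : n → ℂ) :
    star (H *ᵥ w) ⬝ᵥ H *ᵥ w = ((∑ k, E k ^ 2 * Complex.normSq (star (ψ k) ⬝ᵥ w) : ℝ) : ℂ) := by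
  rw [mulVec_eq_sum_smul_of_eq_sum hH, star_sum_smul_dotProduct_sum_smul hψ]
  push_cast [Complex.normSq_eq_conj_mul_self, Complex.star_def, map_mul, Complex.conj_ofReal]
  exact Finset.sum_congr rfl fun k _ => by ring

end Orthonormal

section Complete

variable {n : Type*} [Fintype n] [DecidableEq n] {ψ : n → n → ℂ}
  (hψ : ∀ j k, star (ψ j) ⬝ᵥ ψ k = if j = k then 1 else 0)
include hψ

lemma sum_vecMulVec_star_self_eq_one : ∑ k, vecMulVec (ψ k) (star (ψ k)) = 1 := by
  let W : Matrix n n ℂ := of fun i k => ψ k i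
  have hW : Wᴴ * W = 1 := by
    ext j k
    simpa [W, mul_apply, one_apply, dotProduct] using hψ j k
  -- a square matrix with orthonormal columns also has orthonormal rows
  rw [← mul_eq_one_comm.mp hW]
  ext i j
  simp [W, Matrix.sum_apply, vecMulVec_apply, mul_apply]

lemma eq_sum_smul_of_orthonormal (w : n → ℂ) : w = ∑ k, (star (ψ k) ⬝ᵥ w) • ψ k := by
  conv_lhs => rw [← one_mulVec w, ← sum_vecMulVec_star_self_eq_one hψ]
  simp only [sum_mulVec, vecMulVec_mulVec, op_smul_eq_smul]

lemma sum_normSq_dotProduct_eq_dotProduct_self (w : n → ℂ) :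
    ((∑ k, Complex.normSq (star (ψ k) ⬝ᵥ w) : ℝ) : ℂ) = star w ⬝ᵥ w := by
  rw [congrArg (star w ⬝ᵥ ·) (eq_sum_smul_of_orthonormal hψ w), star_dotProduct_sum_smul]
  push_cast [Complex.normSq_eq_conj_mul_self, Complex.star_def]
  rfl

end Complete

lemma norm_le_l2_opNorm_of_mulVec_eq_smul {n : Type*} [Fintype n] [DecidableEq n]
    {A : Matrix n n ℂ} {x : n → ℂ} {e : ℂ} (hx : x ≠ 0) (hAx : A *ᵥ x = e • x) :
    ‖e‖ ≤ ‖A‖ := by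
  have hpos : 0 < ‖WithLp.toLp 2 x‖ := norm_pos_iff.mpr (by simpa using hx)
  have h := A.l2_opNorm_mulVec (WithLp.toLp 2 x)
  rw [show A *ᵥ (WithLp.toLp 2 x).ofLp = e • x from hAx, map_smul, norm_smul] at h
  exact le_of_mul_le_mul_right h hpos

section Gradient

variable {D : ℕ}

lemma frobSq_smul (c : ℂ) (A : Matrix (Fin D) (Fin D) ℂ) :
    frobSq (c • A) = Complex.normSq c * frobSq A := by
  simp only [frobSq, Matrix.smul_apply, smul_eq_mul, Complex.normSq_mul, Finset.mul_sum]

lemma ofReal_frobSq (A : Matrix (Fin D) (Fin D) ℂ) :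
    (frobSq A : ℂ) = ∑ i, ∑ j, star (A i j) * A i j := by
  simp only [frobSq, Complex.ofReal_sum, Complex.normSq_eq_conj_mul_self, Complex.star_def]

lemma ofReal_frobSq_vecMulVec_sub_vecMulVec (x y z t : Fin D → ℂ) :
    (frobSq (vecMulVec x (star y) - vecMulVec z (star t)) : ℂ)
      = (star x ⬝ᵥ x) * (star y ⬝ᵥ y) + (star z ⬝ᵥ z) * (star t ⬝ᵥ t)
        - (star x ⬝ᵥ z) * (star t ⬝ᵥ y) - (star z ⬝ᵥ x) * (star y ⬝ᵥ t) := by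
  simp only [ofReal_frobSq, Matrix.sub_apply, vecMulVec_apply, dotProduct, Finset.sum_mul_sum,
    ← Finset.sum_sub_distrib, ← Finset.sum_add_distrib, Pi.star_apply, star_sub, star_mul,
    star_star]
  refine Finset.sum_congr rfl fun i _ => Finset.sum_congr rfl fun j _ => ?_
  ring

lemma rgrad_vecMulVec_star_self {H U : Matrix (Fin D) (Fin D) ℂ} (hU : U * Uᴴ = 1)
    (φ : Fin D → ℂ) :
    rgrad H U (vecMulVec φ (star φ))
      = (1 / 2 : ℂ) • (vecMulVec (H *ᵥ U *ᵥ φ) (star φ)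
          - vecMulVec (U *ᵥ φ) (star (Uᴴ *ᵥ H *ᵥ U *ᵥ φ))) := by
  have hUUh : U *ᵥ Uᴴ *ᵥ H *ᵥ U *ᵥ φ = H *ᵥ U *ᵥ φ := by rw [mulVec_mulVec, hU, one_mulVec]
  simp only [rgrad, msym, mul_assoc, mul_vecMulVec, conjTranspose_vecMulVec, star_star,
    Matrix.mul_smul, Matrix.mul_add]
  rw [hUUh]
  module

theorem frobSq_rgrad_vecMulVec_star_self {H U : Matrix (Fin D) (Fin D) ℂ}
    (hU : U ∈ unitaryGroup (Fin D) ℂ) {φ : Fin D → ℂ} (hφ : star φ ⬝ᵥ φ = 1) :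
    frobSq (rgrad H U (vecMulVec φ (star φ)))
      = ((star (H *ᵥ U *ᵥ φ) ⬝ᵥ H *ᵥ U *ᵥ φ).re
          - ((star (U *ᵥ φ) ⬝ᵥ H *ᵥ U *ᵥ φ) ^ 2).re) / 2 := by
  have hUhU : Uᴴ * U = 1 := mem_unitaryGroup_iff'.mp hU
  have hUUh : U * Uᴴ = 1 := mem_unitaryGroup_iff.mp hU
  set w := U *ᵥ φ
  set u := H *ᵥ w
  have hw : star w ⬝ᵥ w = 1 := by rw [star_mulVec_dotProduct_mulVec hUhU, hφ]
  have ha : star (Uᴴ *ᵥ u) ⬝ᵥ Uᴴ *ᵥ u = star u ⬝ᵥ u := by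
    rw [star_mulVec_dotProduct_mulVec (by rwa [conjTranspose_conjTranspose])]
  have hφa : star φ ⬝ᵥ Uᴴ *ᵥ u = star w ⬝ᵥ u := by
    rw [dotProduct_mulVec, ← star_mulVec]
  rw [rgrad_vecMulVec_star_self hUUh, frobSq_smul, ← Complex.ofReal_re (frobSq _),
    ofReal_frobSq_vecMulVec_sub_vecMulVec, hφ, hw, ha, hφa, star_dotProduct u w,
    star_dotProduct (Uᴴ *ᵥ u) φ, hφa]
  generalize star u ⬝ᵥ u = g, star w ⬝ᵥ u = z
  rw [show Complex.normSq (1 / 2) = 1 / 4 by norm_num [Complex.normSq_apply]]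
  simp only [Complex.sub_re, Complex.add_re, Complex.mul_re, Complex.star_def, Complex.conj_re,
    Complex.conj_im, sq, mul_one, one_mul]
  ring

end Gradient

/-- gradient-dominance bound
`‖grad f(U)‖_F² ≥ (Δ²/(16‖H‖))·(f(U) − E₀)` when `f(U) − E₀ ≤ Δ/2`. -/
theorem grad_dominance (D : ℕ) (s : ℕ) (hs : s < D)
    (H : Matrix (Fin D) (Fin D) ℂ)
    (E : Fin D → ℝ) (ψ : Fin D → (Fin D → ℂ))
    (hortho : ∀ j k : Fin D, star (ψ j) ⬝ᵥ ψ k = if j = k then 1 else 0)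
    (hH : H = ∑ k, (E k : ℂ) • vecMulVec (ψ k) (star (ψ k)))
    (hmono : ∀ j k : Fin D, j ≤ k → E j ≤ E k)
    (E0 : ℝ) (hdeg : ∀ k : Fin D, (k : ℕ) < s → E k = E0)
    (Δ : ℝ) (hΔ : Δ = E ⟨s, hs⟩ - E0) (hΔpos : 0 < Δ)
    (φ0 : Fin D → ℂ) (hφ0 : star φ0 ⬝ᵥ φ0 = 1)
    (U : Matrix (Fin D) (Fin D) ℂ) (hU : U ∈ Matrix.unitaryGroup (Fin D) ℂ)
    (hHnorm : 0 < ‖H‖)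
    (hinit : (star (U.mulVec φ0) ⬝ᵥ H.mulVec (U.mulVec φ0)).re - E0 ≤ Δ / 2) :
    Δ ^ 2 / (16 * ‖H‖) * ((star (U.mulVec φ0) ⬝ᵥ H.mulVec (U.mulVec φ0)).re - E0)
      ≤ frobSq (rgrad H U (vecMulVec φ0 (star φ0))) := by
  set w := U *ᵥ φ0
  have hp1 : ∑ k, Complex.normSq (star (ψ k) ⬝ᵥ w) = 1 := by
    have h := sum_normSq_dotProduct_eq_dotProduct_self hortho w
    rw [star_mulVec_dotProduct_mulVec (mem_unitaryGroup_iff'.mp hU), hφ0] at h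
    exact_mod_cast h
  have hE : ∀ k, |E k| ≤ ‖H‖ := fun k => by
    have hψk : ψ k ≠ 0 := fun h => by simpa [h] using hortho k k
    simpa using norm_le_l2_opNorm_of_mulVec_eq_smul hψk (mulVec_eq_smul_of_eq_sum hortho hH k)
  have hgap : ∀ k, E k = E0 ∨ E0 + Δ ≤ E k := fun k => by
    rcases lt_or_ge (k : ℕ) s with hk | hk
    · exact .inl (hdeg k hk)
    · exact .inr (by linarith [hmono ⟨s, hs⟩ k hk])
  rw [star_dotProduct_mulVec_eq_sum hH, Complex.ofReal_re] at hinit ⊢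
  rw [frobSq_rgrad_vecMulVec_star_self hU hφ0, star_dotProduct_mulVec_eq_sum hH,
    star_mulVec_dotProduct_mulVec_eq_sum hortho hH w, ← Complex.ofReal_pow, Complex.ofReal_re,
    Complex.ofReal_re]
  exact mul_mean_sub_le_variance_of_gap (fun k => Complex.normSq_nonneg _) hp1 hgap hΔpos hHnorm hE hinit
end
end

section
/- For any two D×D unitary matrices U₁, U₂, any Hermitian H, and ρ_0 = |φ_0⟩⟨φ_0| a rank-one projector, the Riemannian gradients grad f(U) = HUρ_0 − U·sym(U†HUρ_0) satisfy the Lipschitz bound ‖grad f(U₁) − grad f(U₂)‖_F ≤ 4‖H‖·‖U₁ − U₂‖_F. -/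
open Matrix BigOperators
open scoped Matrix.Norms.L2Operator

noncomputable section

/-- Frobenius norm. -/
def frob {D : ℕ} (A : Matrix (Fin D) (Fin D) ℂ) : ℝ :=
  Real.sqrt (∑ i, ∑ j, Complex.normSq (A i j))

/-!
With `Δ = U₁ - U₂`, the difference of the gradients is
`H Δ ρ - Δ sym(U₁† H U₁ ρ) - U₂ sym(Δ† H U₁ ρ + U₂† H Δ ρ)`.
Unitaries and the projector `ρ` are contractions in operator norm, so is `sym`, and
`‖A B‖_F ≤ ‖A‖ ‖B‖_F`; hence the three terms are bounded by `‖H‖ ‖Δ‖_F`, `‖H‖ ‖Δ‖_F` and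
`2 ‖H‖ ‖Δ‖_F`.
-/

open WithLp

lemma CStarRing.norm_le_one_of_mem_unitary {E : Type*} [NormedRing E] [StarRing E] [CStarRing E]
    {U : E} (hU : U ∈ unitary E) : ‖U‖ ≤ 1 := by
  have h : ‖U‖ * ‖U‖ ≤ 1 := by
    rw [← CStarRing.norm_star_mul_self, Unitary.star_mul_self_of_mem hU]
    exact (IsStarProjection.one E).norm_le
  nlinarith [norm_nonneg U]

lemma Matrix.isStarProjection_vecMulVec_star {n α : Type*} [Fintype n] [Semiring α] [StarRing α]
    {φ : n → α} (hφ : star φ ⬝ᵥ φ = 1) : IsStarProjection (vecMulVec φ (star φ)) where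
  isIdempotentElem := by
    rw [IsIdempotentElem, vecMulVec_mul_vecMulVec, hφ, one_smul]
  isSelfAdjoint := by
    rw [IsSelfAdjoint, star_eq_conjTranspose, conjTranspose_vecMulVec, star_star]

section Frobenius

variable {𝕜 : Type*} [RCLike 𝕜] {l m n : Type*} [Fintype l] [Fintype m] [Fintype n]

lemma Matrix.norm_toLp_uncurry_sq (A : Matrix m n 𝕜) :
    ‖toLp 2 (Function.uncurry A)‖ ^ 2 = ∑ j, ∑ i, ‖A i j‖ ^ 2 := by
  rw [EuclideanSpace.norm_sq_eq, Fintype.sum_prod_type_right]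
  rfl

lemma Matrix.norm_toLp_uncurry_mul_le [DecidableEq m] (A : Matrix l m 𝕜) (B : Matrix m n 𝕜) :
    ‖toLp 2 (Function.uncurry (A * B))‖ ≤ ‖A‖ * ‖toLp 2 (Function.uncurry B)‖ := by
  have hcol (j : n) : ∑ i, ‖(A * B) i j‖ ^ 2 ≤ ‖A‖ ^ 2 * ∑ i, ‖B i j‖ ^ 2 := by
    have := pow_le_pow_left₀ (norm_nonneg _) (A.l2_opNorm_mulVec (toLp 2 fun i => B i j)) 2
    simpa [mul_pow, EuclideanSpace.norm_sq_eq, Matrix.mul_apply, Matrix.mulVec, dotProduct]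
      using this
  refine le_of_sq_le_sq ?_ (by positivity)
  rw [mul_pow, norm_toLp_uncurry_sq, norm_toLp_uncurry_sq, Finset.mul_sum]
  exact Finset.sum_le_sum fun j _ => hcol j

end Frobenius

section SquareMatrices

variable {D : ℕ}

lemma frob_eq_norm_toLp (A : Matrix (Fin D) (Fin D) ℂ) :
    frob A = ‖toLp 2 (Function.uncurry A)‖ := by
  rw [EuclideanSpace.norm_eq, Fintype.sum_prod_type]
  simp only [frob, Complex.normSq_eq_norm_sq]
  rfl

lemma frob_nonneg (A : Matrix (Fin D) (Fin D) ℂ) : 0 ≤ frob A := Real.sqrt_nonneg _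

lemma frob_add_le (A B : Matrix (Fin D) (Fin D) ℂ) : frob (A + B) ≤ frob A + frob B := by
  calc frob (A + B) = ‖toLp 2 (Function.uncurry A) + toLp 2 (Function.uncurry B)‖ :=
        frob_eq_norm_toLp _
    _ ≤ frob A + frob B := by simp only [frob_eq_norm_toLp]; exact norm_add_le _ _

lemma frob_sub_le (A B : Matrix (Fin D) (Fin D) ℂ) : frob (A - B) ≤ frob A + frob B := by
  calc frob (A - B) = ‖toLp 2 (Function.uncurry A) - toLp 2 (Function.uncurry B)‖ :=
        frob_eq_norm_toLp _
    _ ≤ frob A + frob B := by simp only [frob_eq_norm_toLp]; exact norm_sub_le _ _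

lemma frob_smul (c : ℂ) (A : Matrix (Fin D) (Fin D) ℂ) : frob (c • A) = ‖c‖ * frob A := by
  simp only [frob_eq_norm_toLp]
  exact norm_smul c (toLp 2 (Function.uncurry A))

lemma frob_conjTranspose (A : Matrix (Fin D) (Fin D) ℂ) : frob Aᴴ = frob A := by
  rw [frob, frob, Finset.sum_comm]
  simp [conjTranspose_apply]

lemma frob_mul_le (A B : Matrix (Fin D) (Fin D) ℂ) : frob (A * B) ≤ ‖A‖ * frob B := by
  simp only [frob_eq_norm_toLp]
  exact Matrix.norm_toLp_uncurry_mul_le A B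

lemma frob_mul_le' (A B : Matrix (Fin D) (Fin D) ℂ) : frob (A * B) ≤ frob A * ‖B‖ := by
  rw [← frob_conjTranspose, conjTranspose_mul, ← frob_conjTranspose A, mul_comm,
    ← l2_opNorm_conjTranspose B]
  exact frob_mul_le _ _

lemma frob_mul_le_of_le {A B : Matrix (Fin D) (Fin D) ℂ} {r s : ℝ} (hA : ‖A‖ ≤ r)
    (hB : frob B ≤ s) : frob (A * B) ≤ r * s :=
  (frob_mul_le A B).trans <| mul_le_mul hA hB (frob_nonneg B) ((norm_nonneg A).trans hA)

lemma frob_mul_le_of_le' {A B : Matrix (Fin D) (Fin D) ℂ} {r s : ℝ} (hA : frob A ≤ r)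
    (hB : ‖B‖ ≤ s) : frob (A * B) ≤ r * s :=
  (frob_mul_le' A B).trans <| mul_le_mul hA hB (norm_nonneg B) ((frob_nonneg A).trans hA)

lemma frob_msym_le (A : Matrix (Fin D) (Fin D) ℂ) : frob (msym A) ≤ frob A := by
  calc frob (msym A) ≤ ‖(1 / 2 : ℂ)‖ * (frob A + frob Aᴴ) := by
        rw [msym, frob_smul]; gcongr; exact frob_add_le _ _
    _ = frob A := by rw [frob_conjTranspose]; norm_num; ring

lemma norm_msym_le (A : Matrix (Fin D) (Fin D) ℂ) : ‖msym A‖ ≤ ‖A‖ := by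
  calc ‖msym A‖ ≤ ‖(1 / 2 : ℂ)‖ * (‖A‖ + ‖Aᴴ‖) := by
        rw [msym, norm_smul]; gcongr; exact norm_add_le _ _
    _ = ‖A‖ := by rw [l2_opNorm_conjTranspose]; norm_num; ring

lemma msym_sub (A B : Matrix (Fin D) (Fin D) ℂ) : msym A - msym B = msym (A - B) := by
  simp only [msym, conjTranspose_sub, ← smul_sub]
  abel_nf

lemma rgrad_sub_rgrad (H U V ρ : Matrix (Fin D) (Fin D) ℂ) :
    rgrad H U ρ - rgrad H V ρ = H * (U - V) * ρ - (U - V) * msym (Uᴴ * H * U * ρ)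
      - V * msym ((U - V)ᴴ * (H * U * ρ) + Vᴴ * H * (U - V) * ρ) := by
  have hdiff : Uᴴ * H * U * ρ - Vᴴ * H * V * ρ
      = (U - V)ᴴ * (H * U * ρ) + Vᴴ * H * (U - V) * ρ := by
    rw [conjTranspose_sub]
    noncomm_ring
  rw [← hdiff, ← msym_sub, rgrad, rgrad]
  noncomm_ring

lemma frob_rgrad_sub_rgrad_le {H U V ρ : Matrix (Fin D) (Fin D) ℂ}
    (hU : ‖U‖ ≤ 1) (hV : ‖V‖ ≤ 1) (hρ : ‖ρ‖ ≤ 1) :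
    frob (rgrad H U ρ - rgrad H V ρ) ≤ 4 * ‖H‖ * frob (U - V) := by
  set Δ := U - V
  have hU' : ‖Uᴴ‖ ≤ 1 := by rwa [l2_opNorm_conjTranspose]
  have hV' : ‖Vᴴ‖ ≤ 1 := by rwa [l2_opNorm_conjTranspose]
  have h₁ : frob (H * Δ * ρ) ≤ ‖H‖ * frob Δ * 1 := frob_mul_le_of_le' (frob_mul_le _ _) hρ
  have h₂ : frob (Δ * msym (Uᴴ * H * U * ρ)) ≤ frob Δ * (1 * ‖H‖ * 1 * 1) :=
    frob_mul_le_of_le' le_rfl <| (norm_msym_le _).trans <|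
      norm_mul_le_of_le (norm_mul_le_of_le (norm_mul_le_of_le hU' le_rfl) hU) hρ
  have h₃ : frob (V * msym (Δᴴ * (H * U * ρ) + Vᴴ * H * Δ * ρ))
      ≤ 1 * (frob Δ * (‖H‖ * 1 * 1) + 1 * ‖H‖ * frob Δ * 1) :=
    frob_mul_le_of_le hV <| (frob_msym_le _).trans <| (frob_add_le _ _).trans <| add_le_add
      (frob_mul_le_of_le' (frob_conjTranspose Δ).le
        (norm_mul_le_of_le (norm_mul_le_of_le le_rfl hU) hρ))
      (frob_mul_le_of_le' (frob_mul_le_of_le (norm_mul_le_of_le hV' le_rfl) le_rfl) hρ)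
  rw [rgrad_sub_rgrad]
  linarith [frob_sub_le (H * Δ * ρ - Δ * msym (Uᴴ * H * U * ρ))
      (V * msym (Δᴴ * (H * U * ρ) + Vᴴ * H * Δ * ρ)),
    frob_sub_le (H * Δ * ρ) (Δ * msym (Uᴴ * H * U * ρ))]

end SquareMatrices

theorem grad_lipschitz_general (D : ℕ) (H : Matrix (Fin D) (Fin D) ℂ)
    (φ0 : Fin D → ℂ) (hφ0 : star φ0 ⬝ᵥ φ0 = 1)
    (U₁ U₂ : Matrix (Fin D) (Fin D) ℂ)
    (hU₁ : U₁ ∈ Matrix.unitaryGroup (Fin D) ℂ)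
    (hU₂ : U₂ ∈ Matrix.unitaryGroup (Fin D) ℂ) :
    frob (rgrad H U₁ (vecMulVec φ0 (star φ0)) - rgrad H U₂ (vecMulVec φ0 (star φ0)))
      ≤ 4 * ‖H‖ * frob (U₁ - U₂) :=
  frob_rgrad_sub_rgrad_le (CStarRing.norm_le_one_of_mem_unitary hU₁)
    (CStarRing.norm_le_one_of_mem_unitary hU₂) (isStarProjection_vecMulVec_star hφ0).norm_le

/-- Lipschitz bound
`‖grad f(U₁) − grad f(U₂)‖_F ≤ 4‖H‖·‖U₁ − U₂‖_F`. -/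
theorem grad_lipschitz (D : ℕ) (H : Matrix (Fin D) (Fin D) ℂ) (hH : H.IsHermitian)
    (φ0 : Fin D → ℂ) (hφ0 : star φ0 ⬝ᵥ φ0 = 1)
    (U₁ U₂ : Matrix (Fin D) (Fin D) ℂ)
    (hU₁ : U₁ ∈ Matrix.unitaryGroup (Fin D) ℂ)
    (hU₂ : U₂ ∈ Matrix.unitaryGroup (Fin D) ℂ) :
    frob (rgrad H U₁ (vecMulVec φ0 (star φ0)) - rgrad H U₂ (vecMulVec φ0 (star φ0)))
      ≤ 4 * ‖H‖ * frob (U₁ - U₂) :=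
  grad_lipschitz_general D H φ0 hφ0 U₁ U₂ hU₁ hU₂
end
end

section
/- Under the eigenvalue ordering E_0 = ⋯ = E_{s−1} < E_s ≤ ⋯ ≤ E_{D−1}, every critical point Û_k of f(U) = ⟨φ_0|U†HU|φ_0⟩ with k ≥ s is a strict saddle: there exists a skew-Hermitian Ω such that the Hessian bilinear form 2 Σ_l (E_l − E_k)|Ω_{lk}|² is strictly negative. Moreover, for k ≤ s−1 the Hessian bilinear form is nonnegative for every skew-Hermitian Ω, and is bounded below by 2Δ Σ_{l≥s}|Ω_{lk}|² with Δ = E_s − E_0. -/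
open Matrix BigOperators

noncomputable section

namespace Matrix

variable {n α : Type*}

theorem conjTranspose_vecMulVec_sub_vecMulVec [Ring α] [StarRing α] (u v : n → α) :
    (vecMulVec u (star v) - vecMulVec v (star u))ᴴ
      = -(vecMulVec u (star v) - vecMulVec v (star u)) := by
  simp only [conjTranspose_sub, conjTranspose_vecMulVec, star_star, neg_sub]

theorem vecMulVec_sub_vecMulVec_mulVec [Fintype n] [CommRing α] [StarRing α] {u v : n → α}
    (hv : star v ⬝ᵥ v = 1) (huv : star u ⬝ᵥ v = 0) :
    (vecMulVec u (star v) - vecMulVec v (star u)) *ᵥ v = u := by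
  simp [sub_mulVec, vecMulVec_mulVec, hv, huv]

end Matrix

section Orthonormal

variable {ι n : Type*} [Fintype ι] [DecidableEq ι] [Fintype n] {ψ : ι → n → ℂ}

theorem sum_mul_normSq_dotProduct_of_orthonormal
    (hψ : ∀ j l, star (ψ j) ⬝ᵥ ψ l = if j = l then 1 else 0) (c : ι → ℝ) (j : ι) :
    ∑ l, c l * Complex.normSq (star (ψ l) ⬝ᵥ ψ j) = c j := by
  rw [Finset.sum_eq_single j (fun l _ hl => by simp [hψ, hl]) (by simp)]
  simp [hψ]

theorem exists_skewHermitian_sum_mul_normSq_eq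
    (hψ : ∀ j l, star (ψ j) ⬝ᵥ ψ l = if j = l then 1 else 0) (c : ι → ℝ) {j k : ι}
    (hjk : j ≠ k) :
    ∃ Ω : Matrix n n ℂ, Ωᴴ = -Ω ∧
      ∑ l, c l * Complex.normSq (star (ψ l) ⬝ᵥ Ω *ᵥ ψ k) = c j := by
  refine ⟨vecMulVec (ψ j) (star (ψ k)) - vecMulVec (ψ k) (star (ψ j)),
    conjTranspose_vecMulVec_sub_vecMulVec _ _, ?_⟩
  rw [vecMulVec_sub_vecMulVec_mulVec (by simp [hψ]) (by simp [hψ, hjk]),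
    sum_mul_normSq_dotProduct_of_orthonormal hψ]

end Orthonormal

theorem Finset.mul_sum_filter_le_sum_mul {ι : Type*} [Fintype ι] (p : ι → Prop)
    [DecidablePred p] {Δ : ℝ} {c w : ι → ℝ} (hc : ∀ l, 0 ≤ c l) (hcp : ∀ l, p l → Δ ≤ c l)
    (hw : ∀ l, 0 ≤ w l) :
    Δ * ∑ l ∈ univ.filter p, w l ≤ ∑ l, c l * w l := by
  rw [mul_sum]
  calc ∑ l ∈ univ.filter p, Δ * w l
      ≤ ∑ l ∈ univ.filter p, c l * w l :=
        sum_le_sum fun l hl => mul_le_mul_of_nonneg_right (hcp l (mem_filter.1 hl).2) (hw l)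
    _ ≤ ∑ l, c l * w l :=
        sum_le_sum_of_subset_of_nonneg (filter_subset _ _)
          fun l _ _ => mul_nonneg (hc l) (hw l)

/-- under the ordering `E₀ = ⋯ = E_{s−1} < E_s ≤ ⋯ ≤ E_{D−1}`,
for `k ≥ s` there is a skew-Hermitian `Ω` making the Hessian bilinear form
`2 Σ_l (E_l − E_k)|Ω_{lk}|²` strictly negative (strict saddle); for `k ≤ s−1`
the form is nonnegative for every skew-Hermitian `Ω` and bounded below by
`2Δ Σ_{l≥s}|Ω_{lk}|²`. -/
theorem saddle_classification (D : ℕ) (s : ℕ) (hs0 : 0 < s) (hs : s < D)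
    (E : Fin D → ℝ) (ψ : Fin D → (Fin D → ℂ))
    (hortho : ∀ j l : Fin D, star (ψ j) ⬝ᵥ ψ l = if j = l then 1 else 0)
    (hmono : ∀ j k : Fin D, j ≤ k → E j ≤ E k)
    (E0 : ℝ) (hdeg : ∀ k : Fin D, (k : ℕ) < s → E k = E0)
    (Δ : ℝ) (hΔ : Δ = E ⟨s, hs⟩ - E0) (hΔpos : 0 < Δ) :
    (∀ k : Fin D, s ≤ (k : ℕ) →
      ∃ Ω : Matrix (Fin D) (Fin D) ℂ, Ωᴴ = -Ω ∧
        2 * ∑ l, (E l - E k) * Complex.normSq (star (ψ l) ⬝ᵥ Ω.mulVec (ψ k)) < 0) ∧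
    (∀ k : Fin D, (k : ℕ) < s →
      ∀ Ω : Matrix (Fin D) (Fin D) ℂ, Ωᴴ = -Ω →
        0 ≤ 2 * ∑ l, (E l - E k) * Complex.normSq (star (ψ l) ⬝ᵥ Ω.mulVec (ψ k)) ∧
        2 * Δ * ∑ l ∈ Finset.univ.filter (fun l : Fin D => s ≤ (l : ℕ)),
            Complex.normSq (star (ψ l) ⬝ᵥ Ω.mulVec (ψ k))
          ≤ 2 * ∑ l, (E l - E k) * Complex.normSq (star (ψ l) ⬝ᵥ Ω.mulVec (ψ k))) := by
  have hE_ge : ∀ l : Fin D, s ≤ (l : ℕ) → E0 + Δ ≤ E l := fun l hl => by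
    linarith [hmono ⟨s, hs⟩ l (Fin.le_def.2 hl)]
  constructor
  · intro k hk
    -- the ground state `ψ 0` lies strictly below `ψ k`; rotate `ψ k` towards it
    let g : Fin D := ⟨0, hs0.trans hs⟩
    obtain ⟨Ω, hΩ, hval⟩ := exists_skewHermitian_sum_mul_normSq_eq hortho (fun l => E l - E k)
      (j := g) (k := k) (Fin.ne_of_val_ne (show 0 ≠ (k : ℕ) by omega))
    refine ⟨Ω, hΩ, ?_⟩
    rw [hval, hdeg g hs0]
    linarith [hE_ge k hk]
  · intro k hk Ω _
    have hc : ∀ l : Fin D, 0 ≤ E l - E k := fun l => by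
      rcases lt_or_ge (l : ℕ) s with hl | hl
      · rw [hdeg l hl, hdeg k hk, sub_self]
      · linarith [hE_ge l hl, hdeg k hk]
    refine ⟨mul_nonneg two_pos.le
      (Finset.sum_nonneg fun l _ => mul_nonneg (hc l) (Complex.normSq_nonneg _)), ?_⟩
    rw [mul_assoc]
    exact mul_le_mul_of_nonneg_left (Finset.mul_sum_filter_le_sum_mul _ hc
      (fun l hl => by linarith [hE_ge l hl, hdeg k hk]) fun _ => Complex.normSq_nonneg _) two_pos.le
end
end

section
/- For a unitary U and tangent vector ξ satisfying ξ†U + U†ξ = 0, the polar retraction Retr_U(ξ) = (U + ξ)((U + ξ)†(U + ξ))^{−1/2} satisfies ‖Retr_U(ξ) − (U + ξ)‖_F ≤ (1/2)‖ξ‖_F². -/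
/-!
Put `A = U + ξ`. Tangency gives `AᴴA = 1 + ξᴴξ`, so the eigenvalues `μᵢ` of `AᴴA` are at least `1`
and `‖ξ‖_F² = Σ (μᵢ - 1)`. In the functional calculus of `AᴴA`, `Retr_U(ξ) - A = A g(AᴴA)` with
`g(x) = x^{-1/2} - 1`, hence `‖Retr_U(ξ) - A‖_F² = Σ g(μᵢ)² μᵢ = Σ (√μᵢ - 1)²`. By AM–GM,
`0 ≤ √μ - 1 ≤ (μ - 1)/2`, and `Σ aᵢ² ≤ (Σ aᵢ)²` for `aᵢ ≥ 0` concludes.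
-/

open Matrix BigOperators
open scoped ComplexOrder

noncomputable section

/-- The positive-semidefinite square root, as `Matrix.PosSemidef.sqrt` was defined in the older
Mathlib (removed since). -/
def posSemidefSqrt {n : Type*} [Fintype n] [DecidableEq n] {A : Matrix n n ℂ}
    (hA : A.IsHermitian) : Matrix n n ℂ :=
  hA.eigenvectorUnitary.1 * diagonal ((↑) ∘ (Real.sqrt ·) ∘ hA.eigenvalues) *
    (star hA.eigenvectorUnitary : Matrix n n ℂ)

/-- Polar retraction `Retr_U(ξ) = (U + ξ)((U + ξ)†(U + ξ))^{−1/2}`, using the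
positive-semidefinite square root of `(U+ξ)†(U+ξ)`. -/
def polarRetr {D : ℕ} (U ξ : Matrix (Fin D) (Fin D) ℂ) : Matrix (Fin D) (Fin D) ℂ :=
  (U + ξ) * (posSemidefSqrt (Matrix.posSemidef_conjTranspose_mul_self (U + ξ)).1)⁻¹

lemma frob_eq_sqrt_re_trace {D : ℕ} (A : Matrix (Fin D) (Fin D) ℂ) :
    frob A = √(Aᴴ * A).trace.re := by
  unfold frob
  congr 1
  rw [trace, Complex.re_sum, Finset.sum_comm]
  refine Finset.sum_congr rfl fun j _ => ?_
  simp only [diag_apply, mul_apply, conjTranspose_apply, Complex.re_sum]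
  refine Finset.sum_congr rfl fun i _ => ?_
  rw [Complex.star_def, ← Complex.normSq_eq_conj_mul_self, Complex.ofReal_re]

lemma star_add_mul_add_eq_one_add_star_mul_self {R : Type*} [Ring R] [StarRing R]
    {u x : R} (hu : star u * u = 1) (hx : star x * u + star u * x = 0) :
    star (u + x) * (u + x) = 1 + star x * x := by
  rw [star_add, add_mul, mul_add, mul_add, hu, add_assoc, ← add_assoc (star u * x),
    add_comm (star u * x), hx, zero_add]

lemma Matrix.PosSemidef.one_le_of_mem_spectrum_one_add {𝕜 n : Type*} [RCLike 𝕜] [Fintype n]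
    [DecidableEq n] {P : Matrix n n 𝕜} (hP : P.PosSemidef) {x : ℝ}
    (hx : x ∈ spectrum ℝ (1 + P)) : 1 ≤ x := by
  rw [← map_one (algebraMap ℝ (Matrix n n 𝕜)), ← spectrum.singleton_add_eq,
    hP.1.spectrum_real_eq_range_eigenvalues] at hx
  obtain ⟨_, rfl, _, ⟨i, rfl⟩, rfl⟩ := hx
  simpa using hP.eigenvalues_nonneg i

section FunctionalCalculus

variable {𝕜 n : Type*} [RCLike 𝕜] [Fintype n] [DecidableEq n]

lemma Matrix.IsHermitian.trace_cfc {A : Matrix n n 𝕜} (hA : A.IsHermitian) (f : ℝ → ℝ) :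
    (cfc f A).trace = ∑ i, (f (hA.eigenvalues i) : 𝕜) := by
  rw [hA.cfc_eq, IsHermitian.cfc, Unitary.conjStarAlgAut_apply, trace_mul_cycle,
    Unitary.coe_star_mul_self, one_mul, trace_diagonal]
  rfl

lemma Matrix.trace_conjTranspose_mul_self_mul_cfc (A : Matrix n n 𝕜) (f : ℝ → ℝ) :
    ((A * cfc f (Aᴴ * A))ᴴ * (A * cfc f (Aᴴ * A))).trace =
      ∑ i, ((f ((posSemidef_conjTranspose_mul_self A).1.eigenvalues i) ^ 2 *
        (posSemidef_conjTranspose_mul_self A).1.eigenvalues i : ℝ) : 𝕜) := by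
  set B := Aᴴ * A
  have hB : B.IsHermitian := (posSemidef_conjTranspose_mul_self A).1
  have hc (g : ℝ → ℝ) : ContinuousOn g (spectrum ℝ B) := B.finite_real_spectrum.continuousOn g
  have hM : (cfc f B)ᴴ = cfc f B := cfc_predicate f B
  have hsandwich : (A * cfc f B)ᴴ * (A * cfc f B) = cfc (fun x => f x ^ 2 * x) B := by
    rw [show (fun x => f x ^ 2 * x) = fun x => f x * (x * f x) by ext; ring,
      cfc_mul _ _ _ (hc _) (hc _), cfc_mul _ _ _ (hc _) (hc _), cfc_id' ℝ B, conjTranspose_mul,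
      hM, mul_assoc, ← mul_assoc Aᴴ]
  rw [hsandwich, hB.trace_cfc]

end FunctionalCalculus

lemma posSemidefSqrt_eq_cfc {n : Type*} [Fintype n] [DecidableEq n] {A : Matrix n n ℂ}
    (hA : A.IsHermitian) : posSemidefSqrt hA = cfc Real.sqrt A := by
  rw [hA.cfc_eq, IsHermitian.cfc, Unitary.conjStarAlgAut_apply]
  rfl

lemma mul_inv_posSemidefSqrt_sub_self {n : Type*} [Fintype n] [DecidableEq n]
    (A : Matrix n n ℂ) (hpos : ∀ x ∈ spectrum ℝ (Aᴴ * A), 0 < x) :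
    A * (posSemidefSqrt (posSemidef_conjTranspose_mul_self A).1)⁻¹ - A =
      A * cfc (fun x => (√x)⁻¹ - 1) (Aᴴ * A) := by
  have hc (g : ℝ → ℝ) : ContinuousOn g (spectrum ℝ (Aᴴ * A)) :=
    (Aᴴ * A).finite_real_spectrum.continuousOn g
  have hsa : IsSelfAdjoint (Aᴴ * A) := (posSemidef_conjTranspose_mul_self A).1
  rw [posSemidefSqrt_eq_cfc, nonsing_inv_eq_ringInverse,
    ← cfc_inv _ _ (fun x hx => (Real.sqrt_pos.2 (hpos x hx)).ne') (hc _),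
    cfc_sub _ _ _ (hc _) (hc _), cfc_const_one ℝ (Aᴴ * A), mul_sub, mul_one]

lemma inv_sqrt_sub_one_sq_mul_le {μ : ℝ} (hμ : 1 ≤ μ) :
    ((√μ)⁻¹ - 1) ^ 2 * μ ≤ (1 / 2 * (μ - 1)) ^ 2 := by
  have hs : √μ ^ 2 = μ := Real.sq_sqrt (by linarith)
  have h1 : 1 ≤ √μ := Real.one_le_sqrt.2 hμ
  have : ((√μ)⁻¹ - 1) ^ 2 * μ = (√μ - 1) ^ 2 := by
    nth_rewrite 2 [← hs]
    field_simp
    ring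
  rw [this]
  nlinarith

lemma sqrt_sum_inv_sqrt_sub_one_sq_mul_le {ι : Type*} (s : Finset ι) {μ : ι → ℝ}
    (hμ : ∀ i ∈ s, 1 ≤ μ i) :
    √(∑ i ∈ s, ((√(μ i))⁻¹ - 1) ^ 2 * μ i) ≤ 1 / 2 * ∑ i ∈ s, (μ i - 1) := by
  have hnonneg : ∀ i ∈ s, 0 ≤ 1 / 2 * (μ i - 1) := fun i hi => by linarith [hμ i hi]
  rw [Finset.mul_sum, Real.sqrt_le_left (Finset.sum_nonneg hnonneg)]
  calc ∑ i ∈ s, ((√(μ i))⁻¹ - 1) ^ 2 * μ i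
      ≤ ∑ i ∈ s, (1 / 2 * (μ i - 1)) ^ 2 :=
        Finset.sum_le_sum fun i hi => inv_sqrt_sub_one_sq_mul_le (hμ i hi)
    _ ≤ (∑ i ∈ s, 1 / 2 * (μ i - 1)) ^ 2 := Finset.sum_sq_le_sq_sum_of_nonneg hnonneg

/-- second-order retraction bound
`‖Retr_U(ξ) − (U + ξ)‖_F ≤ (1/2)‖ξ‖_F²`. -/
theorem polar_retraction_bound (D : ℕ) (U ξ : Matrix (Fin D) (Fin D) ℂ)
    (hU : U ∈ Matrix.unitaryGroup (Fin D) ℂ)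
    (hξ : ξᴴ * U + Uᴴ * ξ = 0) :
    frob (polarRetr U ξ - (U + ξ)) ≤ (1 / 2) * (frob ξ) ^ 2 := by
  set A := U + ξ
  have hB : Aᴴ * A = 1 + ξᴴ * ξ :=
    star_add_mul_add_eq_one_add_star_mul_self (Unitary.star_mul_self_of_mem hU) hξ
  have hspec (x : ℝ) (hx : x ∈ spectrum ℝ (Aᴴ * A)) : 1 ≤ x :=
    (posSemidef_conjTranspose_mul_self ξ).one_le_of_mem_spectrum_one_add (hB ▸ hx)
  have hH : (Aᴴ * A).IsHermitian := (posSemidef_conjTranspose_mul_self A).1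
  set μ := hH.eigenvalues
  have hμ (i : Fin D) : 1 ≤ μ i := hspec _ (hH.eigenvalues_mem_spectrum_real i)
  have hξμ : (ξᴴ * ξ).trace.re = ∑ i, (μ i - 1) := by
    rw [eq_sub_of_add_eq' hB.symm, trace_sub, hH.trace_eq_sum_eigenvalues, trace_one]
    simp [μ]
  rw [polarRetr, mul_inv_posSemidefSqrt_sub_self A (fun x hx => by linarith [hspec x hx]),
    frob_eq_sqrt_re_trace, trace_conjTranspose_mul_self_mul_cfc, frob_eq_sqrt_re_trace,
    Real.sq_sqrt (hξμ ▸ Finset.sum_nonneg fun i _ => by linarith [hμ i]), hξμ]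
  simp only [Complex.re_sum]
  exact sqrt_sum_inv_sqrt_sub_one_sq_mul_le _ fun i _ => hμ i
end
end

section
/- Let H be Hermitian, P a Hermitian matrix with P² = I, |φ_0⟩ a unit vector, θ ~ N(0,σ²), and U(θ) = cos(θ)I − i sin(θ)P. Then E_θ[⟨φ_0|U(θ)†HU(θ)|φ_0⟩] = α⟨φ_0|H|φ_0⟩ + β⟨φ_0|PHP|φ_0⟩ with α = (1+e^{−2σ²})/2 and β = (1−e^{−2σ²})/2. -/
/-!
Because `P` is Hermitian, `U(θ)ᴴ H U(θ) = cos²θ H + sin²θ PHP + i sinθ cosθ (PH − HP)`, so the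
energy is a quadratic trigonometric polynomial in `θ`. By the double-angle formulas its Gaussian
expectation only involves `E[cos 2θ] = e^{−2σ²}` and `E[sin 2θ] = 0`, the real and imaginary parts
of the characteristic function of `N(0, σ²)` at `2`.
-/

open Matrix MeasureTheory ProbabilityTheory BigOperators

noncomputable section

/-- Pauli-rotation unitary `U(θ) = cos(θ)I − i sin(θ)P`. -/
def pauliRot {D : ℕ} (P : Matrix (Fin D) (Fin D) ℂ) (θ : ℝ) :
    Matrix (Fin D) (Fin D) ℂ :=
  (Real.cos θ : ℂ) • (1 : Matrix (Fin D) (Fin D) ℂ)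
    - (Complex.I * Real.sin θ) • P

open Complex

section CharFun

variable (μ : Measure ℝ) [IsFiniteMeasure μ] (t : ℝ)

lemma integrable_cexp_mul_I : Integrable (fun x : ℝ => cexp (t * x * I)) μ :=
  Integrable.of_bound (by fun_prop) 1 (ae_of_all _ fun x => by
    rw [← ofReal_mul, norm_exp_ofReal_mul_I])

lemma integrable_cos_mul : Integrable (fun x => Real.cos (t * x)) μ :=
  Integrable.of_bound (by fun_prop) 1 (ae_of_all _ fun x => by
    simpa using Real.abs_cos_le_one (t * x))

lemma integrable_sin_mul : Integrable (fun x => Real.sin (t * x)) μ :=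
  Integrable.of_bound (by fun_prop) 1 (ae_of_all _ fun x => by
    simpa using Real.abs_sin_le_one (t * x))

lemma integral_cos_mul_eq_re_charFun : ∫ x, Real.cos (t * x) ∂μ = (charFun μ t).re := by
  rw [charFun_apply_real, ← RCLike.re_eq_complex_re, ← integral_re (integrable_cexp_mul_I μ t)]
  simp only [RCLike.re_eq_complex_re, ← ofReal_mul, exp_ofReal_mul_I_re]

lemma integral_sin_mul_eq_im_charFun : ∫ x, Real.sin (t * x) ∂μ = (charFun μ t).im := by
  rw [charFun_apply_real, ← RCLike.im_eq_complex_im, ← integral_im (integrable_cexp_mul_I μ t)]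
  simp only [RCLike.im_eq_complex_im, ← ofReal_mul, exp_ofReal_mul_I_im]

end CharFun

section Gaussian

variable (m : ℝ) (v : NNReal) (t : ℝ)

lemma integral_cos_mul_gaussianReal :
    ∫ x, Real.cos (t * x) ∂gaussianReal m v = Real.exp (-(v * t ^ 2 / 2)) * Real.cos (t * m) := by
  rw [integral_cos_mul_eq_re_charFun, charFun_gaussianReal, exp_re]
  congr 2 <;> simp [← ofReal_pow]

lemma integral_sin_mul_gaussianReal :
    ∫ x, Real.sin (t * x) ∂gaussianReal m v = Real.exp (-(v * t ^ 2 / 2)) * Real.sin (t * m) := by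
  rw [integral_sin_mul_eq_im_charFun, charFun_gaussianReal, exp_im]
  congr 2 <;> simp [← ofReal_pow]

end Gaussian

lemma integral_cos_sq_sin_sq_sin_mul_cos_gaussianReal (v : NNReal) (a b c : ℝ) :
    ∫ x, (Real.cos x ^ 2 * a + Real.sin x ^ 2 * b + Real.sin x * Real.cos x * c)
        ∂gaussianReal 0 v
      = (1 + Real.exp (-2 * v)) / 2 * a + (1 - Real.exp (-2 * v)) / 2 * b := by
  have double_angle : ∀ x : ℝ,
      Real.cos x ^ 2 * a + Real.sin x ^ 2 * b + Real.sin x * Real.cos x * c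
        = (a + b) / 2 + (a - b) / 2 * Real.cos (2 * x) + c / 2 * Real.sin (2 * x) := by
    intro x
    rw [Real.cos_two_mul, Real.sin_two_mul]
    linear_combination b * Real.sin_sq_add_cos_sq x
  simp_rw [double_angle]
  have hcos : Integrable (fun x : ℝ => (a - b) / 2 * Real.cos (2 * x)) (gaussianReal 0 v) :=
    (integrable_cos_mul _ 2).const_mul _
  have hsin : Integrable (fun x : ℝ => c / 2 * Real.sin (2 * x)) (gaussianReal 0 v) :=
    (integrable_sin_mul _ 2).const_mul _
  rw [integral_add ((integrable_const _).fun_add hcos) hsin, integral_add (integrable_const _) hcos,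
    integral_const_mul, integral_const_mul, integral_cos_mul_gaussianReal,
    integral_sin_mul_gaussianReal]
  simp only [integral_const, probReal_univ, one_smul, mul_zero, Real.cos_zero, Real.sin_zero]
  ring_nf

lemma pauliRot_conjTranspose_mul_mul {D : ℕ} (H : Matrix (Fin D) (Fin D) ℂ)
    {P : Matrix (Fin D) (Fin D) ℂ} (hP : P.IsHermitian) (θ : ℝ) :
    (pauliRot P θ)ᴴ * H * pauliRot P θ
      = (Real.cos θ ^ 2 : ℂ) • H + (Real.sin θ ^ 2 : ℂ) • (P * H * P)
        + (I * Real.sin θ * Real.cos θ) • (P * H - H * P) := by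
  simp only [pauliRot, conjTranspose_sub, conjTranspose_smul, conjTranspose_one, hP.eq,
    Matrix.sub_mul, Matrix.mul_sub, Matrix.smul_mul, Matrix.mul_smul, Matrix.one_mul,
    Matrix.mul_one, smul_smul, smul_sub, star_mul', Complex.star_def,
    Complex.conj_I, Complex.conj_ofReal]
  rw [Matrix.mul_assoc]
  match_scalars <;> ring_nf
  simp [I_sq]

lemma re_dotProduct_pauliRot_conj_mulVec {D : ℕ} (H : Matrix (Fin D) (Fin D) ℂ)
    {P : Matrix (Fin D) (Fin D) ℂ} (hP : P.IsHermitian) (φ : Fin D → ℂ) (θ : ℝ) :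
    (star φ ⬝ᵥ ((pauliRot P θ)ᴴ * H * pauliRot P θ) *ᵥ φ).re
      = Real.cos θ ^ 2 * (star φ ⬝ᵥ H *ᵥ φ).re + Real.sin θ ^ 2 * (star φ ⬝ᵥ (P * H * P) *ᵥ φ).re
        + Real.sin θ * Real.cos θ * (I * (star φ ⬝ᵥ (P * H - H * P) *ᵥ φ)).re := by
  rw [pauliRot_conjTranspose_mul_mul H hP]
  simp only [add_mulVec, smul_mulVec, dotProduct_add, dotProduct_smul, smul_eq_mul, add_re,
    ← ofReal_pow, re_ofReal_mul, mul_assoc, mul_re I, I_re, I_im, im_ofReal_mul]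
  ring

theorem expected_rotated_energy_general (D : ℕ)
    (H : Matrix (Fin D) (Fin D) ℂ)
    (P : Matrix (Fin D) (Fin D) ℂ) (hP : P.IsHermitian)
    (φ0 : Fin D → ℂ)
    (σ : NNReal) :
    (∫ θ, (star φ0 ⬝ᵥ ((pauliRot P θ)ᴴ * H * pauliRot P θ).mulVec φ0).re
        ∂(gaussianReal 0 (σ ^ 2)))
      = (1 + Real.exp (-2 * (σ : ℝ) ^ 2)) / 2 * (star φ0 ⬝ᵥ H.mulVec φ0).re
        + (1 - Real.exp (-2 * (σ : ℝ) ^ 2)) / 2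
            * (star φ0 ⬝ᵥ (P * H * P).mulVec φ0).re := by
  simp_rw [re_dotProduct_pauliRot_conj_mulVec H hP φ0]
  rw [integral_cos_sq_sin_sq_sin_mul_cos_gaussianReal, NNReal.coe_pow]

/-- `E_θ[⟨φ₀|U(θ)†HU(θ)|φ₀⟩] = α⟨φ₀|H|φ₀⟩ + β⟨φ₀|PHP|φ₀⟩`
with `α = (1+e^{−2σ²})/2`, `β = (1−e^{−2σ²})/2`, `θ ~ N(0,σ²)`. -/
theorem expected_rotated_energy (D : ℕ)
    (H : Matrix (Fin D) (Fin D) ℂ) (hH : H.IsHermitian)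
    (P : Matrix (Fin D) (Fin D) ℂ) (hP : P.IsHermitian) (hP2 : P * P = 1)
    (φ0 : Fin D → ℂ) (hφ0 : star φ0 ⬝ᵥ φ0 = 1)
    (σ : NNReal) :
    (∫ θ, (star φ0 ⬝ᵥ ((pauliRot P θ)ᴴ * H * pauliRot P θ).mulVec φ0).re
        ∂(gaussianReal 0 (σ ^ 2)))
      = (1 + Real.exp (-2 * (σ : ℝ) ^ 2)) / 2 * (star φ0 ⬝ᵥ H.mulVec φ0).re
        + (1 - Real.exp (-2 * (σ : ℝ) ^ 2)) / 2
            * (star φ0 ⬝ᵥ (P * H * P).mulVec φ0).re :=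
  expected_rotated_energy_general D H P hP φ0 σ
end
end
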